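/- arXiv:1601.00513 — 3 statements merged into one kernel-verified Lean document; each statement's English description precedes it below -/
import Mathlib

section
/- If a function f: ℝ → ℝ is of locally bounded variation, i.e. f = α + β with α monotonically increasing and β monotonically decreasing, then there exists a Lipschitz continuous function g: ℝ → ℝ with Lipschitz constant 1 such that f = g ∘ h_f, where h_f := f⁺ − f⁻ with f⁺ the minimal increasing part of f normalized by f⁺(0)=f(0) and f⁻ := f − f⁺. -/
/-!
Every increasing part `α` with `α 0 = f 0` lies above `f 0` to the right of `0` and below it to
the left, so `f⁺` is an infimum of increasing parts on `[0, ∞)` and a supremum on `(-∞, 0]`.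
Monotonicity of `α` and of `α - f` therefore passes to `f⁺` on each half-line, hence to `f⁺` and
`f⁺ - f = -f⁻` on all of `ℝ`. With `u = f⁺` and `v = f⁺ - f` both increasing, `f = u - v` and
`h_f = u + v`, so `|f y - f x| ≤ |h_f y - h_f x|`. Hence `f` factors through `h_f` by a function
that is `1`-Lipschitz on the range of `h_f`, and McShane's extension makes it `1`-Lipschitz on `ℝ`.
-/

open Set

/-- The canonical increasing part `f⁺` of a function of locally bounded variation,
normalized by `f⁺ 0 = f 0`. -/
noncomputable def fplus (f : ℝ → ℝ) (x : ℝ) : ℝ :=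
  if 0 < x then
    sInf {y | ∃ α : ℝ → ℝ, Monotone α ∧ Antitone (f - α) ∧ α 0 = f 0 ∧ y = α x}
  else if x = 0 then f 0
  else
    sSup {y | ∃ α : ℝ → ℝ, Monotone α ∧ Antitone (f - α) ∧ α 0 = f 0 ∧ y = α x}

/-- `f⁻ := f - f⁺`. -/
noncomputable def fminus (f : ℝ → ℝ) (x : ℝ) : ℝ := f x - fplus f x

/-- `h_f := f⁺ - f⁻`. -/
noncomputable def hBV (f : ℝ → ℝ) (x : ℝ) : ℝ := fplus f x - fminus f x

open Function
open scoped NNReal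

theorem Monotone.dist_sub_le_dist_add {ι : Type*} [LinearOrder ι] {u v : ι → ℝ}
    (hu : Monotone u) (hv : Monotone v) (x y : ι) :
    dist ((u - v) x) ((u - v) y) ≤ dist ((u + v) x) ((u + v) y) := by
  wlog hxy : y ≤ x generalizing x y
  · rw [dist_comm, dist_comm ((u + v) x)]
    exact this y x (le_of_not_ge hxy)
  have hu' := hu hxy
  have hv' := hv hxy
  simp only [Real.dist_eq, Pi.sub_apply, Pi.add_apply]
  calc |u x - v x - (u y - v y)| ≤ u x + v x - (u y + v y) := abs_le.2 ⟨by linarith, by linarith⟩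
    _ ≤ |u x + v x - (u y + v y)| := le_abs_self _

theorem exists_lipschitzWith_comp_eq {X Y : Type*} [PseudoMetricSpace Y] {f : X → ℝ}
    {h : X → Y} {K : ℝ≥0} (hf : ∀ x y, dist (f x) (f y) ≤ K * dist (h x) (h y)) :
    ∃ g : Y → ℝ, LipschitzWith K g ∧ f = g ∘ h := by
  have hfac : f.FactorsThrough h := fun x y hxy => dist_le_zero.1 (by simpa [hxy] using hf x y)
  have hext : ∀ x, extend h f 0 (h x) = f x := hfac.extend_apply 0
  have hlip : LipschitzOnWith K (extend h f 0) (range h) := by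
    refine LipschitzOnWith.of_dist_le_mul ?_
    rintro _ ⟨x, rfl⟩ _ ⟨y, rfl⟩
    rw [hext, hext]
    exact hf x y
  obtain ⟨g, hg, hg_eq⟩ := hlip.extend_real
  exact ⟨g, hg, funext fun x => by rw [comp_apply, ← hg_eq (mem_range_self x), hext]⟩

def IsIncreasingPart (f α : ℝ → ℝ) : Prop :=
  Monotone α ∧ Antitone (f - α) ∧ α 0 = f 0

def increasingPartValues (f : ℝ → ℝ) (x : ℝ) : Set ℝ :=
  {y | ∃ α, IsIncreasingPart f α ∧ y = α x}

namespace IsIncreasingPart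

variable {f α : ℝ → ℝ}

theorem monotone_sub (hα : IsIncreasingPart f α) : Monotone (α - f) :=
  neg_sub f α ▸ hα.2.1.neg

theorem mem_increasingPartValues (hα : IsIncreasingPart f α) (x : ℝ) :
    α x ∈ increasingPartValues f x :=
  ⟨α, hα, rfl⟩

theorem le_apply_of_nonneg (hα : IsIncreasingPart f α) {x : ℝ} (hx : 0 ≤ x) : f 0 ≤ α x :=
  hα.2.2 ▸ hα.1 hx

theorem apply_le_of_nonpos (hα : IsIncreasingPart f α) {x : ℝ} (hx : x ≤ 0) : α x ≤ f 0 :=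
  hα.2.2 ▸ hα.1 hx

theorem of_eq_add {a b : ℝ → ℝ} (ha : Monotone a) (hb : Antitone b) (hf : f = a + b) :
    IsIncreasingPart f (fun x => a x - a 0 + f 0) := by
  refine ⟨fun x y hxy => by simpa using ha hxy, fun x y hxy => ?_, by simp⟩
  have := hb hxy
  simp only [Pi.sub_apply, hf, Pi.add_apply]
  linarith

end IsIncreasingPart

section fplus

variable {f α₀ : ℝ → ℝ} {x : ℝ}

theorem fplus_of_pos (hx : 0 < x) : fplus f x = sInf (increasingPartValues f x) := by
  simp [fplus, hx, increasingPartValues, IsIncreasingPart, and_assoc]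

theorem fplus_zero : fplus f 0 = f 0 := by
  simp [fplus]

theorem fplus_of_neg (hx : x < 0) : fplus f x = sSup (increasingPartValues f x) := by
  simp [fplus, hx.not_gt, hx.ne, increasingPartValues, IsIncreasingPart, and_assoc]

theorem bddBelow_increasingPartValues (hx : 0 ≤ x) : BddBelow (increasingPartValues f x) :=
  ⟨f 0, by rintro - ⟨α, hα, rfl⟩; exact hα.le_apply_of_nonneg hx⟩

theorem bddAbove_increasingPartValues (hx : x ≤ 0) : BddAbove (increasingPartValues f x) :=
  ⟨f 0, by rintro - ⟨α, hα, rfl⟩; exact hα.apply_le_of_nonpos hx⟩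

theorem fplus_le_of_nonneg {α : ℝ → ℝ} (hα : IsIncreasingPart f α) (hx : 0 ≤ x) :
    fplus f x ≤ α x := by
  rcases hx.eq_or_lt with rfl | hx
  · rw [fplus_zero, hα.2.2]
  · rw [fplus_of_pos hx]
    exact csInf_le (bddBelow_increasingPartValues hx.le) (hα.mem_increasingPartValues x)

theorem le_fplus_of_nonpos {α : ℝ → ℝ} (hα : IsIncreasingPart f α) (hx : x ≤ 0) :
    α x ≤ fplus f x := by
  rcases hx.eq_or_lt with rfl | hx
  · rw [fplus_zero, hα.2.2]
  · rw [fplus_of_neg hx]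
    exact le_csSup (bddAbove_increasingPartValues hx.le) (hα.mem_increasingPartValues x)

theorem le_fplus_of_nonneg (hα₀ : IsIncreasingPart f α₀) (hx : 0 ≤ x) {c : ℝ}
    (hc : ∀ α, IsIncreasingPart f α → c ≤ α x) : c ≤ fplus f x := by
  rcases hx.eq_or_lt with rfl | hx
  · rw [fplus_zero, ← hα₀.2.2]
    exact hc α₀ hα₀
  · rw [fplus_of_pos hx]
    refine le_csInf ⟨_, hα₀.mem_increasingPartValues x⟩ ?_
    rintro - ⟨α, hα, rfl⟩
    exact hc α hα

theorem fplus_le_of_nonpos (hα₀ : IsIncreasingPart f α₀) (hx : x ≤ 0) {c : ℝ}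
    (hc : ∀ α, IsIncreasingPart f α → α x ≤ c) : fplus f x ≤ c := by
  rcases hx.eq_or_lt with rfl | hx
  · rw [fplus_zero, ← hα₀.2.2]
    exact hc α₀ hα₀
  · rw [fplus_of_neg hx]
    refine csSup_le ⟨_, hα₀.mem_increasingPartValues x⟩ ?_
    rintro - ⟨α, hα, rfl⟩
    exact hc α hα

variable {k : ℝ → ℝ}

theorem monotoneOn_fplus_sub_Ici (hα₀ : IsIncreasingPart f α₀)
    (hk : ∀ α, IsIncreasingPart f α → Monotone (α - k)) : MonotoneOn (fplus f - k) (Ici 0) := by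
  intro x hx y hy hxy
  have : fplus f x - k x + k y ≤ fplus f y := le_fplus_of_nonneg hα₀ hy fun α hα => by
    have hαx := fplus_le_of_nonneg hα hx
    have hαxy := hk α hα hxy
    simp only [Pi.sub_apply] at hαxy
    linarith
  simp only [Pi.sub_apply]
  linarith

theorem monotoneOn_fplus_sub_Iic (hα₀ : IsIncreasingPart f α₀)
    (hk : ∀ α, IsIncreasingPart f α → Monotone (α - k)) : MonotoneOn (fplus f - k) (Iic 0) := by
  intro x hx y hy hxy
  have : fplus f x ≤ fplus f y - k y + k x := fplus_le_of_nonpos hα₀ hx fun α hα => by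
    have hαy := le_fplus_of_nonpos hα hy
    have hαxy := hk α hα hxy
    simp only [Pi.sub_apply] at hαxy
    linarith
  simp only [Pi.sub_apply]
  linarith

theorem monotone_fplus_sub (hα₀ : IsIncreasingPart f α₀)
    (hk : ∀ α, IsIncreasingPart f α → Monotone (α - k)) : Monotone (fplus f - k) :=
  (monotoneOn_fplus_sub_Iic hα₀ hk).Iic_union_Ici (monotoneOn_fplus_sub_Ici hα₀ hk)

end fplus

/-- If `f : ℝ → ℝ` is of locally bounded variation (i.e. `f = α + β` with `α`
monotonically increasing and `β` monotonically decreasing), then there is a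
Lipschitz function `g` with Lipschitz constant `1` such that `f = g ∘ h_f`. -/
theorem stmt0 (f : ℝ → ℝ)
    (hBVf : ∃ α β : ℝ → ℝ, Monotone α ∧ Antitone β ∧ f = α + β) :
    ∃ g : ℝ → ℝ, LipschitzWith 1 g ∧ f = g ∘ hBV f := by
  obtain ⟨a, b, ha, hb, hf⟩ := hBVf
  have hα₀ := IsIncreasingPart.of_eq_add ha hb hf
  have hu : Monotone (fplus f) := by
    simpa using monotone_fplus_sub (k := 0) hα₀ fun α hα => by simpa using hα.1
  have hv : Monotone (fplus f - f) := monotone_fplus_sub hα₀ fun α hα => hα.monotone_sub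
  have hh : hBV f = fplus f + (fplus f - f) := by
    funext x
    simp only [hBV, fminus, Pi.add_apply, Pi.sub_apply]
    ring
  refine exists_lipschitzWith_comp_eq fun x y => ?_
  simpa [hh] using hu.dist_sub_le_dist_add hv x y
end

section
/- Every positively associated ℝ^s-valued random field with finite second moments is quasi-associated. -/
open MeasureTheory

/-- `L p` is a coordinate-wise Lipschitz constant of `f` in the coordinate `p`. -/
def CoordLip {ι : Type*} [DecidableEq ι] (L : ι → ℝ) (f : (ι → ℝ) → ℝ) : Prop :=
  ∀ (p : ι) (x y : ι → ℝ), (∀ q, q ≠ p → x q = y q) → |f x - f y| ≤ L p * |x p - y p|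

/-- Covariance of two real random variables. -/
noncomputable def covRV {Ω : Type*} [MeasureSpace Ω] (X Y : Ω → ℝ) : ℝ :=
  (∫ ω, X ω * Y ω) - (∫ ω, X ω) * (∫ ω, Y ω)

/-- Positive association of an `ℝ^s`-valued random field: covariances of bounded,
coordinate-wise increasing test functions are nonnegative. -/
def PA {Ω : Type*} [MeasureSpace Ω] {T : Type*} (s : ℕ)
    (X : T → Ω → Fin s → ℝ) : Prop :=
  ∀ I J : Finset T,
  ∀ (f : (↥I × Fin s → ℝ) → ℝ) (g : (↥J × Fin s → ℝ) → ℝ),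
    (∃ C, ∀ x, |f x| ≤ C) → (∃ C, ∀ x, |g x| ≤ C) → Monotone f → Monotone g →
    0 ≤ covRV (fun ω => f fun p => X p.1.1 ω p.2) (fun ω => g fun p => X p.1.1 ω p.2)

/-- Quasi-association of an `ℝ^s`-valued random field. -/
def QA {Ω : Type*} [MeasureSpace Ω] {T : Type*} [DecidableEq T] (s : ℕ)
    (X : T → Ω → Fin s → ℝ) : Prop :=
  ∀ I J : Finset T,
  ∀ (f : (↥I × Fin s → ℝ) → ℝ) (g : (↥J × Fin s → ℝ) → ℝ),
  ∀ (Lf : ↥I × Fin s → ℝ) (Lg : ↥J × Fin s → ℝ),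
    (∀ p, 0 ≤ Lf p) → (∀ q, 0 ≤ Lg q) → CoordLip Lf f → CoordLip Lg g →
    |covRV (fun ω => f fun p => X p.1.1 ω p.2) (fun ω => g fun p => X p.1.1 ω p.2)| ≤
      ∑ p : ↥I × Fin s, ∑ q : ↥J × Fin s,
        Lf p * Lg q * |covRV (fun ω => X p.1.1 ω p.2) (fun ω => X q.1.1 ω q.2)|

/-!
Adding to a coordinate-wise Lipschitz `f` the linear form `ℓ(x) = ∑ L_p x_p` built from its
Lipschitz constants makes both `ℓ + f` and `ℓ - f` coordinate-wise increasing. Positive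
association, extended from bounded to square-integrable increasing functions by truncation,
makes the four covariances `cov(ℓ ± f, ℓ' ± g)` nonnegative, and by bilinearity they add up to
`|cov(f, g)| ≤ cov(ℓ, ℓ') = ∑ L_p L'_q cov(X_p, X_q)`.
-/

open ProbabilityTheory Filter Topology

namespace CoordLip

variable {ι : Type*} [DecidableEq ι] {L : ι → ℝ} {f : (ι → ℝ) → ℝ}

lemma nonneg (hf : CoordLip L f) (p : ι) : 0 ≤ L p := by
  have h := hf p 0 (Pi.single p 1) fun q hq => by simp [hq]
  simp only [Pi.zero_apply, Pi.single_eq_same, zero_sub, abs_neg, abs_one, mul_one] at h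
  exact (abs_nonneg _).trans h

lemma neg (hf : CoordLip L f) : CoordLip L fun x => -f x := fun p x y hxy => by
  rw [neg_sub_neg, abs_sub_comm]
  exact hf p x y hxy

variable [Fintype ι]

lemma abs_sub_le_sum (hf : CoordLip L f) (x y : ι → ℝ) :
    |f x - f y| ≤ ∑ p, L p * |x p - y p| := by
  -- move from `x` to `y` one coordinate at a time
  suffices key : ∀ S : Finset ι, |f (S.piecewise y x) - f x| ≤ ∑ p ∈ S, L p * |x p - y p| by
    simpa only [Finset.piecewise_univ, abs_sub_comm (f y)] using key Finset.univ
  intro S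
  induction S using Finset.induction_on with
  | empty => simp
  | insert a S ha ih =>
    set z := S.piecewise y x
    have hstep : |f (Function.update z a (y a)) - f z| ≤ L a * |x a - y a| := by
      have h := hf a (Function.update z a (y a)) z fun q hq => Function.update_of_ne hq _ _
      have hza : z a = x a := Finset.piecewise_eq_of_notMem _ _ _ ha
      rwa [Function.update_self, hza, abs_sub_comm (y a)] at h
    rw [Finset.piecewise_insert, Finset.sum_insert ha]
    exact (abs_sub_le _ (f z) _).trans (add_le_add hstep ih)

lemma monotone_linear_add (hf : CoordLip L f) : Monotone fun x => ∑ p, L p * x p + f x := by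
  intro x y hxy
  have hdiff : ∑ p, L p * |x p - y p| = ∑ p, L p * y p - ∑ p, L p * x p := by
    rw [← Finset.sum_sub_distrib]
    refine Finset.sum_congr rfl fun p _ => ?_
    rw [abs_sub_comm, abs_of_nonneg (sub_nonneg.2 (hxy p))]
    ring
  linarith [le_abs_self (f x - f y), hf.abs_sub_le_sum x y]

lemma monotone_linear_sub (hf : CoordLip L f) : Monotone fun x => ∑ p, L p * x p - f x := by
  simpa only [← sub_eq_add_neg] using hf.neg.monotone_linear_add

lemma lipschitzWith (hf : CoordLip L f) : LipschitzWith (∑ p, L p).toNNReal f := by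
  refine LipschitzWith.of_dist_le_mul fun x y => ?_
  rw [Real.coe_toNNReal _ (Finset.sum_nonneg fun p _ => hf.nonneg p), Finset.sum_mul,
    Real.dist_eq]
  refine (hf.abs_sub_le_sum x y).trans (Finset.sum_le_sum fun p _ => ?_)
  rw [← Real.dist_eq]
  exact mul_le_mul_of_nonneg_left (dist_le_pi_dist x y p) (hf.nonneg p)

lemma memLp_comp {Ω : Type*} [MeasurableSpace Ω] {μ : Measure Ω} [IsFiniteMeasure μ]
    {r : ENNReal} (hf : CoordLip L f) {Y : Ω → ι → ℝ} (hY : ∀ p, MemLp (fun ω => Y ω p) r μ) :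
    MemLp (fun ω => f (Y ω)) r μ := by
  have hlip : LipschitzWith (∑ p, L p).toNNReal fun x => f x - f 0 :=
    LipschitzWith.of_dist_le_mul fun x y => by
      simpa only [dist_sub_right] using hf.lipschitzWith.dist_le_mul x y
  convert (hlip.comp_memLp (sub_self _) (memLp_pi_iff.2 hY)).add (memLp_const (f 0)) using 1
  ext ω
  simp

end CoordLip

def truncate (n : ℕ) (t : ℝ) : ℝ := max (-n) (min t n)

lemma monotone_truncate (n : ℕ) : Monotone (truncate n) :=
  monotone_const.max (monotone_id.min monotone_const)

lemma continuous_truncate (n : ℕ) : Continuous (truncate n) :=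
  continuous_const.max (continuous_id.min continuous_const)

lemma abs_truncate_le (n : ℕ) (t : ℝ) : |truncate n t| ≤ n :=
  abs_le.2 ⟨le_max_left _ _, max_le (by simp) (min_le_right t n)⟩

lemma abs_truncate_le_abs (n : ℕ) (t : ℝ) : |truncate n t| ≤ |t| := by
  refine abs_le.2 ⟨le_max_of_le_right (le_min (neg_abs_le t) ?_), max_le ?_ ?_⟩
  · exact (neg_nonpos.2 (abs_nonneg t)).trans n.cast_nonneg
  · exact (neg_nonpos.2 n.cast_nonneg).trans (abs_nonneg t)
  · exact (min_le_left t n).trans (le_abs_self t)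

lemma tendsto_truncate (t : ℝ) : Tendsto (fun n => truncate n t) atTop (𝓝 t) := by
  refine tendsto_const_nhds.congr' (eventually_atTop.2 ⟨⌈|t|⌉₊, fun n hn => ?_⟩)
  have htn : |t| ≤ n := (Nat.le_ceil _).trans (Nat.cast_le.2 hn)
  have hle : t ≤ n := (le_abs_self t).trans htn
  have hge : -(n : ℝ) ≤ t := by linarith [neg_abs_le t]
  simp only [truncate, min_eq_left hle, max_eq_right hge]

section Covariance

variable {Ω : Type*}

lemma tendsto_integral_truncate [MeasurableSpace Ω] {μ : Measure Ω} {u : Ω → ℝ}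
    (hu : Integrable u μ) :
    Tendsto (fun n : ℕ => ∫ ω, truncate n (u ω) ∂μ) atTop (𝓝 (∫ ω, u ω ∂μ)) :=
  tendsto_integral_of_dominated_convergence (fun ω => |u ω|)
    (fun n => (continuous_truncate n).comp_aestronglyMeasurable hu.aestronglyMeasurable) hu.abs
    (fun n => ae_of_all _ fun ω => abs_truncate_le_abs n (u ω))
    (ae_of_all _ fun ω => tendsto_truncate (u ω))

lemma tendsto_integral_truncate_mul_truncate [MeasurableSpace Ω] {μ : Measure Ω}
    {u v : Ω → ℝ} (hu : MemLp u 2 μ) (hv : MemLp v 2 μ) :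
    Tendsto (fun n : ℕ => ∫ ω, truncate n (u ω) * truncate n (v ω) ∂μ) atTop
      (𝓝 (∫ ω, u ω * v ω ∂μ)) := by
  have hmeas (w : Ω → ℝ) (hw : MemLp w 2 μ) (n : ℕ) :
      AEStronglyMeasurable (fun ω => truncate n (w ω)) μ :=
    (continuous_truncate n).comp_aestronglyMeasurable hw.aestronglyMeasurable
  refine tendsto_integral_of_dominated_convergence (fun ω => |u ω| * |v ω|)
    (fun n => (hmeas u hu n).mul (hmeas v hv n)) (hu.abs.integrable_mul hv.abs)
    (fun n => ae_of_all _ fun ω => ?_) (ae_of_all _ fun ω => ?_)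
  · rw [Real.norm_eq_abs, abs_mul]
    exact mul_le_mul (abs_truncate_le_abs n _) (abs_truncate_le_abs n _) (abs_nonneg _)
      (abs_nonneg _)
  · exact (tendsto_truncate (u ω)).mul (tendsto_truncate (v ω))

variable [MeasureSpace Ω] [IsProbabilityMeasure (volume : Measure Ω)]

lemma tendsto_covRV_truncate {u v : Ω → ℝ} (hu : MemLp u 2 volume) (hv : MemLp v 2 volume) :
    Tendsto (fun n : ℕ => covRV (fun ω => truncate n (u ω)) (fun ω => truncate n (v ω)))
      atTop (𝓝 (covRV u v)) :=
  (tendsto_integral_truncate_mul_truncate hu hv).sub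
    ((tendsto_integral_truncate (hu.integrable one_le_two)).mul
      (tendsto_integral_truncate (hv.integrable one_le_two)))

lemma covRV_nonneg_of_monotone {ι κ : Type*} {Y : Ω → ι → ℝ} {Z : Ω → κ → ℝ}
    (hPA : ∀ (f : (ι → ℝ) → ℝ) (g : (κ → ℝ) → ℝ),
      (∃ C, ∀ x, |f x| ≤ C) → (∃ C, ∀ x, |g x| ≤ C) → Monotone f → Monotone g →
      0 ≤ covRV (fun ω => f (Y ω)) (fun ω => g (Z ω)))
    {F : (ι → ℝ) → ℝ} {G : (κ → ℝ) → ℝ} (hF : Monotone F) (hG : Monotone G)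
    (hFY : MemLp (fun ω => F (Y ω)) 2 volume) (hGZ : MemLp (fun ω => G (Z ω)) 2 volume) :
    0 ≤ covRV (fun ω => F (Y ω)) (fun ω => G (Z ω)) :=
  ge_of_tendsto' (tendsto_covRV_truncate hFY hGZ) fun n =>
    hPA _ _ ⟨n, fun _ => abs_truncate_le n _⟩ ⟨n, fun _ => abs_truncate_le n _⟩
      ((monotone_truncate n).comp hF) ((monotone_truncate n).comp hG)

lemma covRV_eq_covariance {u v : Ω → ℝ} (hu : MemLp u 2 volume) (hv : MemLp v 2 volume) :
    covRV u v = cov[u, v] :=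
  (covariance_eq_sub hu hv).symm

end Covariance

lemma abs_covariance_le_of_nonneg {Ω : Type*} [MeasurableSpace Ω] {μ : Measure Ω}
    [IsFiniteMeasure μ] {u v a b : Ω → ℝ} (hu : MemLp u 2 μ) (hv : MemLp v 2 μ)
    (ha : MemLp a 2 μ) (hb : MemLp b 2 μ)
    (hpp : 0 ≤ cov[a + u, b + v; μ]) (hmm : 0 ≤ cov[a - u, b - v; μ])
    (hpm : 0 ≤ cov[a + u, b - v; μ]) (hmp : 0 ≤ cov[a - u, b + v; μ]) :
    |cov[u, v; μ]| ≤ cov[a, b; μ] := by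
  rw [covariance_add_left ha hu (hb.add hv), covariance_add_right ha hb hv,
    covariance_add_right hu hb hv] at hpp
  rw [covariance_sub_left ha hu (hb.sub hv), covariance_sub_right ha hb hv,
    covariance_sub_right hu hb hv] at hmm
  rw [covariance_add_left ha hu (hb.sub hv), covariance_sub_right ha hb hv,
    covariance_sub_right hu hb hv] at hpm
  rw [covariance_sub_left ha hu (hb.add hv), covariance_add_right ha hb hv,
    covariance_add_right hu hb hv] at hmp
  exact abs_le.2 ⟨by linarith, by linarith⟩

theorem abs_covariance_comp_le_of_coordLip {Ω : Type*} [MeasureSpace Ω]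
    [IsProbabilityMeasure (volume : Measure Ω)] {ι κ : Type*} [Fintype ι] [DecidableEq ι]
    [Fintype κ] [DecidableEq κ] {Y : Ω → ι → ℝ} {Z : Ω → κ → ℝ}
    (hPA : ∀ (f : (ι → ℝ) → ℝ) (g : (κ → ℝ) → ℝ),
      (∃ C, ∀ x, |f x| ≤ C) → (∃ C, ∀ x, |g x| ≤ C) → Monotone f → Monotone g →
      0 ≤ covRV (fun ω => f (Y ω)) (fun ω => g (Z ω)))
    (hY : ∀ p, MemLp (fun ω => Y ω p) 2 volume) (hZ : ∀ q, MemLp (fun ω => Z ω q) 2 volume)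
    {L : ι → ℝ} {M : κ → ℝ} {f : (ι → ℝ) → ℝ} {g : (κ → ℝ) → ℝ}
    (hf : CoordLip L f) (hg : CoordLip M g) :
    |cov[fun ω => f (Y ω), fun ω => g (Z ω)]| ≤
      ∑ p, ∑ q, L p * M q * cov[fun ω => Y ω p, fun ω => Z ω q] := by
  have hmono {F : (ι → ℝ) → ℝ} {G : (κ → ℝ) → ℝ} (hF : Monotone F) (hG : Monotone G)
      (hFY : MemLp (fun ω => F (Y ω)) 2 volume) (hGZ : MemLp (fun ω => G (Z ω)) 2 volume) :
      0 ≤ cov[fun ω => F (Y ω), fun ω => G (Z ω)] :=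
    covRV_eq_covariance hFY hGZ ▸ covRV_nonneg_of_monotone hPA hF hG hFY hGZ
  have hfY := hf.memLp_comp hY
  have hgZ := hg.memLp_comp hZ
  have hℓY : MemLp (fun ω => ∑ p, L p * Y ω p) 2 volume :=
    memLp_finsetSum _ fun p _ => (hY p).const_mul _
  have hℓZ : MemLp (fun ω => ∑ q, M q * Z ω q) 2 volume :=
    memLp_finsetSum _ fun q _ => (hZ q).const_mul _
  calc |cov[fun ω => f (Y ω), fun ω => g (Z ω)]|
      ≤ cov[fun ω => ∑ p, L p * Y ω p, fun ω => ∑ q, M q * Z ω q] :=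
        abs_covariance_le_of_nonneg hfY hgZ hℓY hℓZ
          (hmono hf.monotone_linear_add hg.monotone_linear_add (hℓY.add hfY) (hℓZ.add hgZ))
          (hmono hf.monotone_linear_sub hg.monotone_linear_sub (hℓY.sub hfY) (hℓZ.sub hgZ))
          (hmono hf.monotone_linear_add hg.monotone_linear_sub (hℓY.add hfY) (hℓZ.sub hgZ))
          (hmono hf.monotone_linear_sub hg.monotone_linear_add (hℓY.sub hfY) (hℓZ.add hgZ))
    _ = ∑ p, ∑ q, L p * M q * cov[fun ω => Y ω p, fun ω => Z ω q] := by
        rw [covariance_fun_sum_fun_sum (fun p => (hY p).const_mul _) fun q => (hZ q).const_mul _]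
        refine Finset.sum_congr rfl fun p _ => Finset.sum_congr rfl fun q _ => ?_
        rw [covariance_const_mul_left, covariance_const_mul_right]
        ring

/-- Every positively associated `ℝ^s`-valued random field with finite second moments
is quasi-associated. -/
theorem stmt11 {Ω : Type*} [MeasureSpace Ω] [IsProbabilityMeasure (volume : Measure Ω)]
    {T : Type*} [DecidableEq T] (s : ℕ) (X : T → Ω → Fin s → ℝ)
    (hmeas : ∀ t k, Measurable fun ω => X t ω k)
    (hmom : ∀ t k, Integrable (fun ω => (X t ω k) ^ 2) (volume : Measure Ω))
    (hPA : PA s X) :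
    QA s X := by
  intro I J f g Lf Lg hLf hLg hf hg
  have hX : ∀ t k, MemLp (fun ω => X t ω k) 2 volume := fun t k =>
    (memLp_two_iff_integrable_sq (hmeas t k).aestronglyMeasurable).2 (hmom t k)
  rw [covRV_eq_covariance (hf.memLp_comp fun p => hX _ _) (hg.memLp_comp fun q => hX _ _)]
  refine (abs_covariance_comp_le_of_coordLip (Y := fun ω (p : ↥I × Fin s) => X p.1.1 ω p.2)
    (Z := fun ω (q : ↥J × Fin s) => X q.1.1 ω q.2) (hPA I J) (fun p => hX _ _)
    (fun q => hX _ _) hf hg).trans (Finset.sum_le_sum fun p _ => Finset.sum_le_sum fun q _ => ?_)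
  rw [covRV_eq_covariance (hX _ _) (hX _ _)]
  exact mul_le_mul_of_nonneg_left (le_abs_self _) (mul_nonneg (hLf p) (hLg q))
end

section
/- Discretization preserves BL(θ)-dependence with a shift: if (X(t))_{t∈ℝ^d} is BL(θ)-dependent, then for each n ∈ ℕ the field Z_n(j) := n^{−d} Σ_{k₁,…,k_d=1}^n X(j₁+k₁/n, …, j_d+k_d/n) − E X(0), j ∈ ℤ^d, is BL(θ')-dependent over ℤ^d with θ'_r := θ_{r−d} (for r > d). -/
open MeasureTheory Filter Topology

/-- `f` is Lipschitz with constant `K` with respect to the `ℓ¹`-norm. -/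
def LipL1 {ι : Type*} [Fintype ι] (K : ℝ) (f : (ι → ℝ) → ℝ) : Prop :=
  ∀ x y : ι → ℝ, |f x - f y| ≤ K * ∑ i, |x i - y i|

/-- `BL(θ)`-dependence of a real-valued random field over `ℝ^d`. -/
def BLdepR {Ω : Type*} [MeasureSpace Ω] (d : ℕ) (θ : ℕ → ℝ)
    (X : (Fin d → ℝ) → Ω → ℝ) : Prop :=
  ∀ (Δ : ℝ), 1 < Δ →
  ∀ I J : Finset (Fin d → ℝ),
    (∀ x ∈ I, ∀ i, ∃ z : ℤ, x i = z / Δ) →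
    (∀ x ∈ J, ∀ i, ∃ z : ℤ, x i = z / Δ) →
    Disjoint I J →
  ∀ r : ℕ, (∀ x ∈ I, ∀ y ∈ J, (r : ℝ) ≤ ∑ i, |x i - y i|) →
  ∀ (f : (↥I → ℝ) → ℝ) (g : (↥J → ℝ) → ℝ),
    (∃ C, ∀ x, |f x| ≤ C) → (∃ C, ∀ x, |g x| ≤ C) →
  ∀ Kf Kg : ℝ, 0 ≤ Kf → 0 ≤ Kg → LipL1 Kf f → LipL1 Kg g →
    covRV (fun ω => f fun t => X t.1 ω) (fun ω => g fun t => X t.1 ω) ≤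
      (min I.card J.card : ℕ) * Kf * Kg * Δ ^ d * θ r

/-- The discretized field `Z_n(j) = n^{-d} Σ_{k₁,…,k_d=1}^n X(j + k/n) − E X 0`. -/
noncomputable def Zdiscr {Ω : Type*} [MeasureSpace Ω] (d : ℕ)
    (X : (Fin d → ℝ) → Ω → ℝ) (n : ℕ) (j : Fin d → ℤ) (ω : Ω) : ℝ :=
  (n : ℝ) ^ (-(d : ℤ)) *
    (∑ k : Fin d → Fin n, X (fun i => (j i : ℝ) + ((k i : ℝ) + 1) / n) ω) -
  ∫ ω', X 0 ω'

/-!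
A bounded Lipschitz functional of `(Z_n(j))_{j ∈ I}` is a bounded Lipschitz functional of `X`
on the lifted set `Ĩ = {j + (k+1)/n : j ∈ I, k ∈ {0,…,n-1}^d} ⊆ (1/n)ℤ^d`, with Lipschitz
constant divided by `n^d` since each value of `X` enters exactly one block average. The lift is
injective, so `#Ĩ = n^d #I` and `Ĩ, J̃` stay disjoint, and it moves each coordinate by at most
`1`, so `ℓ¹`-distances drop by at most `d`. `BL(θ)`-dependence at mesh `Δ = n` then gives the
bound: the factors `n^{-d}` of the two Lipschitz constants cancel the `n^d` of `#Ĩ` and of `Δ^d`.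
-/

open Function Finset

section GridShift

variable {ι : Type*} {n : ℕ}

noncomputable def gridShift (n : ℕ) (j : ι → ℤ) (k : ι → Fin n) : ι → ℝ :=
  fun i => (j i : ℝ) + ((k i : ℝ) + 1) / n

lemma gridShift_offset_mem_Ioc (u : Fin n) : ((u : ℝ) + 1) / n ∈ Set.Ioc 0 1 := by
  have hn : (0 : ℝ) < n := by exact_mod_cast u.pos
  refine ⟨by positivity, (div_le_one hn).2 ?_⟩
  exact_mod_cast u.isLt

lemma ceil_gridShift (j : ι → ℤ) (k : ι → Fin n) (i : ι) :
    ⌈gridShift n j k i⌉ = j i + 1 := by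
  obtain ⟨h0, h1⟩ := gridShift_offset_mem_Ioc (k i)
  rw [Int.ceil_eq_iff, gridShift]
  push_cast
  constructor <;> linarith

lemma gridShift_injective :
    Injective fun p : (ι → ℤ) × (ι → Fin n) => gridShift n p.1 p.2 := by
  rintro ⟨j, k⟩ ⟨j', k'⟩ h
  have hj : j = j' := funext fun i => by
    simpa only [ceil_gridShift, add_left_inj] using congrArg (fun x : ι → ℝ => ⌈x i⌉) h
  subst hj
  have hk : k = k' := funext fun i => by
    have hn : (n : ℝ) ≠ 0 := by exact_mod_cast (k i).pos.ne'
    have := congrFun h i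
    simp only [gridShift, add_right_inj, div_left_inj' hn, add_left_inj] at this
    exact Fin.ext (by exact_mod_cast this)
  rw [hk]

lemma exists_gridShift_eq_int_div (j : ι → ℤ) (k : ι → Fin n) (i : ι) :
    ∃ z : ℤ, gridShift n j k i = z / n := by
  have hn : (n : ℝ) ≠ 0 := by exact_mod_cast (k i).pos.ne'
  refine ⟨j i * n + k i + 1, ?_⟩
  rw [gridShift]
  push_cast
  field_simp
  ring

lemma abs_sub_le_abs_gridShift_sub_add_one (j j' : ι → ℤ) (k k' : ι → Fin n) (i : ι) :
    |(j i : ℝ) - j' i| ≤ |gridShift n j k i - gridShift n j' k' i| + 1 := by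
  obtain ⟨h0, h1⟩ := gridShift_offset_mem_Ioc (k i)
  obtain ⟨h0', h1'⟩ := gridShift_offset_mem_Ioc (k' i)
  have hoff : |((k' i : ℝ) + 1) / n - ((k i : ℝ) + 1) / n| ≤ 1 :=
    abs_le.2 ⟨by linarith, by linarith⟩
  calc |(j i : ℝ) - j' i|
      = |(gridShift n j k i - gridShift n j' k' i)
          + (((k' i : ℝ) + 1) / n - ((k i : ℝ) + 1) / n)| := by
        rw [gridShift, gridShift]
        ring_nf
    _ ≤ _ := (abs_add_le _ _).trans (by linarith)

end GridShift

lemma LipL1.comp_blockAverage {ι κ σ : Type*} [Fintype ι] [Fintype κ] [Fintype σ]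
    {K c : ℝ} {f : (ι → ℝ) → ℝ} (hf : LipL1 K f) (hK : 0 ≤ K) (hc : 0 ≤ c)
    {e : ι × κ → σ} (he : Injective e) (m : ℝ) :
    LipL1 (K * c) fun x => f fun j => c * ∑ k, x (e (j, k)) - m := by
  intro x y
  calc |f (fun j => c * ∑ k, x (e (j, k)) - m) - f (fun j => c * ∑ k, y (e (j, k)) - m)|
      ≤ K * ∑ j, |c * ∑ k, (x (e (j, k)) - y (e (j, k)))| := by
        refine (hf _ _).trans_eq ?_
        simp only [sub_sub_sub_cancel_right, sum_sub_distrib, mul_sub]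
    _ ≤ K * ∑ j, c * ∑ k, |x (e (j, k)) - y (e (j, k))| := by
        gcongr with j
        rw [abs_mul, abs_of_nonneg hc]
        gcongr
        exact abs_sum_le_sum_abs _ _
    _ = K * c * ∑ p, |x (e p) - y (e p)| := by
        rw [Fintype.sum_prod_type, ← mul_sum, mul_assoc]
    _ ≤ K * c * ∑ t, |x t - y t| := by
        gcongr
        calc ∑ p, |x (e p) - y (e p)| = ∑ t ∈ univ.map ⟨e, he⟩, |x t - y t| :=
              (sum_map univ ⟨e, he⟩ fun t => |x t - y t|).symm
          _ ≤ ∑ t, |x t - y t| := sum_le_univ_sum_of_nonneg fun t => abs_nonneg _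

section GridLift

variable {ι : Type*} [Fintype ι] (n : ℕ)

open Classical in
noncomputable def gridLift (I : Finset (ι → ℤ)) : Finset (ι → ℝ) :=
  (I ×ˢ univ).image fun p => gridShift n p.1 p.2

variable {n}

lemma mem_gridLift {I : Finset (ι → ℤ)} {x : ι → ℝ} :
    x ∈ gridLift n I ↔ ∃ j ∈ I, ∃ k, gridShift n j k = x := by
  simp [gridLift]

lemma gridShift_mem_gridLift {I : Finset (ι → ℤ)} {j : ι → ℤ} (hj : j ∈ I)
    (k : ι → Fin n) :
    gridShift n j k ∈ gridLift n I :=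
  mem_gridLift.2 ⟨j, hj, k, rfl⟩

lemma card_gridLift (I : Finset (ι → ℤ)) : #(gridLift n I) = #I * n ^ Fintype.card ι := by
  classical
  rw [gridLift, card_image_of_injective _ gridShift_injective, card_product, card_univ,
    Fintype.card_fun, Fintype.card_fin]

lemma disjoint_gridLift {I J : Finset (ι → ℤ)} (h : Disjoint I J) :
    Disjoint (gridLift n I) (gridLift n J) := by
  classical
  exact (disjoint_image gridShift_injective).2 (disjoint_product.2 (Or.inl h))

lemma exists_eq_int_div_of_mem_gridLift {I : Finset (ι → ℤ)} {x : ι → ℝ}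
    (hx : x ∈ gridLift n I) (i : ι) : ∃ z : ℤ, x i = z / n := by
  obtain ⟨j, -, k, rfl⟩ := mem_gridLift.1 hx
  exact exists_gridShift_eq_int_div j k i

lemma le_sum_abs_sub_of_mem_gridLift {I J : Finset (ι → ℤ)} {r : ℕ}
    (hr : ∀ x ∈ I, ∀ y ∈ J, (r : ℝ) ≤ ∑ i, |(x i : ℝ) - (y i : ℝ)|)
    {x y : ι → ℝ} (hx : x ∈ gridLift n I) (hy : y ∈ gridLift n J) :
    ((r - Fintype.card ι : ℕ) : ℝ) ≤ ∑ i, |x i - y i| := by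
  obtain ⟨j, hj, k, rfl⟩ := mem_gridLift.1 hx
  obtain ⟨j', hj', k', rfl⟩ := mem_gridLift.1 hy
  have hshift : (r : ℝ) ≤ ∑ i, |gridShift n j k i - gridShift n j' k' i| + Fintype.card ι :=
    calc (r : ℝ) ≤ ∑ i, |(j i : ℝ) - j' i| := hr j hj j' hj'
      _ ≤ ∑ i, (|gridShift n j k i - gridShift n j' k' i| + 1) :=
        sum_le_sum fun i _ => abs_sub_le_abs_gridShift_sub_add_one j j' k k' i
      _ = _ := by simp [sum_add_distrib]
  rcases le_total (Fintype.card ι) r with h | h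
  · rw [Nat.cast_sub h]
    linarith
  · rw [Nat.sub_eq_zero_of_le h, Nat.cast_zero]
    positivity

variable (n) in
noncomputable def gridLiftIncl (I : Finset (ι → ℤ)) :
    I × (ι → Fin n) → gridLift n I :=
  fun p => ⟨gridShift n p.1 p.2, gridShift_mem_gridLift p.1.2 p.2⟩

lemma gridLiftIncl_injective (I : Finset (ι → ℤ)) :
    Injective (gridLiftIncl n I) := by
  rintro ⟨j, k⟩ ⟨j', k'⟩ h
  obtain ⟨hj, hk⟩ := Prod.ext_iff.1 <|
    gridShift_injective (a₁ := ((j : ι → ℤ), k)) (a₂ := (j', k')) (congrArg Subtype.val h)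
  exact Prod.ext (Subtype.ext hj) hk

end GridLift

theorem stmt16_general {Ω : Type*} [MeasureSpace Ω]
    (d : ℕ) (θ : ℕ → ℝ)
    (X : (Fin d → ℝ) → Ω → ℝ) (hBL : BLdepR d θ X) (n : ℕ) (hn : 1 < n) :
    ∀ I J : Finset (Fin d → ℤ), Disjoint I J →
    ∀ r : ℕ, d < r →
      (∀ x ∈ I, ∀ y ∈ J, (r : ℝ) ≤ ∑ i, |(x i : ℝ) - (y i : ℝ)|) →
    ∀ (f : (↥I → ℝ) → ℝ) (g : (↥J → ℝ) → ℝ),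
      (∃ C, ∀ x, |f x| ≤ C) → (∃ C, ∀ x, |g x| ≤ C) →
    ∀ Kf Kg : ℝ, 0 ≤ Kf → 0 ≤ Kg → LipL1 Kf f → LipL1 Kg g →
      covRV (fun ω => f fun t => Zdiscr d X n t.1 ω)
            (fun ω => g fun t => Zdiscr d X n t.1 ω) ≤
        (min I.card J.card : ℕ) * Kf * Kg * θ (r - d) := by
  intro I J hIJ r _ hr f g hfC hgC Kf Kg hKf hKg hf hg
  set c : ℝ := (n : ℝ) ^ (-(d : ℤ)) with hc_def
  set m : ℝ := ∫ ω, X 0 ω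
  have hc : 0 ≤ c := by positivity
  have hlift := hBL n (by exact_mod_cast hn) (gridLift n I) (gridLift n J)
    (fun _ => exists_eq_int_div_of_mem_gridLift) (fun _ => exists_eq_int_div_of_mem_gridLift)
    (disjoint_gridLift hIJ) (r - d)
    (fun _ hx _ hy => by
      simpa only [Fintype.card_fin] using le_sum_abs_sub_of_mem_gridLift hr hx hy)
    (fun x => f fun j => c * ∑ k, x (gridLiftIncl n I (j, k)) - m)
    (fun x => g fun j => c * ∑ k, x (gridLiftIncl n J (j, k)) - m)
    (hfC.imp fun _ hC _ => hC _) (hgC.imp fun _ hC _ => hC _) (Kf * c) (Kg * c)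
    (mul_nonneg hKf hc) (mul_nonneg hKg hc)
    (hf.comp_blockAverage hKf hc (gridLiftIncl_injective I) m)
    (hg.comp_blockAverage hKg hc (gridLiftIncl_injective J) m)
  -- `Zdiscr d X n j` is the block average of `X` over `gridLiftIncl n I (j, ·)`, so the
  -- covariance in `hlift` is the one in the goal up to unfolding.
  refine hlift.trans_eq ?_
  rw [card_gridLift, card_gridLift, Nat.mul_min_mul_right, Fintype.card_fin, hc_def, zpow_neg,
    zpow_natCast]
  push_cast
  field_simp

/-- Discretization preserves `BL(θ)`-dependence with a shift: if `(X t)_{t∈ℝ^d}` is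
`BL(θ)`-dependent, then the discretized field `Z_n` is `BL(θ')`-dependent over `ℤ^d`
with `θ'_r = θ_{r−d}` (for `r > d`). -/
theorem stmt16 {Ω : Type*} [MeasureSpace Ω] [IsProbabilityMeasure (volume : Measure Ω)]
    (d : ℕ) (θ : ℕ → ℝ) (hθ : Antitone θ) (hθ0 : Tendsto θ atTop (𝓝 0))
    (X : (Fin d → ℝ) → Ω → ℝ) (hBL : BLdepR d θ X) (n : ℕ) (hn : 1 < n) :
    ∀ I J : Finset (Fin d → ℤ), Disjoint I J →
    ∀ r : ℕ, d < r →
      (∀ x ∈ I, ∀ y ∈ J, (r : ℝ) ≤ ∑ i, |(x i : ℝ) - (y i : ℝ)|) →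
    ∀ (f : (↥I → ℝ) → ℝ) (g : (↥J → ℝ) → ℝ),
      (∃ C, ∀ x, |f x| ≤ C) → (∃ C, ∀ x, |g x| ≤ C) →
    ∀ Kf Kg : ℝ, 0 ≤ Kf → 0 ≤ Kg → LipL1 Kf f → LipL1 Kg g →
      covRV (fun ω => f fun t => Zdiscr d X n t.1 ω)
            (fun ω => g fun t => Zdiscr d X n t.1 ω) ≤
        (min I.card J.card : ℕ) * Kf * Kg * θ (r - d) :=
  stmt16_general d θ X hBL n hn
end
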